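/- Let L₀, …, L_{d+1} be elements of a noncommutative unital associative algebra, L = ∑ L_i. Then the degree-≤2 truncation (in t) of the product E₀(t/2)·E₁(t)···E_{d+1}(t)·E₀(t/2) averaged with the reversed-order product E₀(t/2)·E_{d+1}(t)···E₁(t)·E₀(t/2), where E_i(s) = I + sL_i + (s²/2)L_i², equals I + tL + (t²/2)L². -/

import Mathlib

/-!
Only the coefficients of `t⁰, t¹, t²` matter. For `a₁, …, aₙ` with sum `s`, the product
`E(a₁) ⋯ E(aₙ)` has these coefficients `1`, `s` and `½ ∑ aᵢ² + ∑_{i<j} aᵢ aⱼ`; the reversed product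
has the same first two and `½ ∑ aᵢ² + ∑_{i>j} aᵢ aⱼ`, so the two quadratic coefficients add up to
`s²`. Averaging therefore turns the middle factor into `exp(t s)` to second order, and the
symmetric half steps `E₀(t/2) · ⋯ · E₀(t/2)` compose with it like `exp(t (a₀ + s))`.
-/

open Polynomial

/-- Order-2 truncation of `exp(sL)` as a polynomial in the central variable `s`. -/
noncomputable def expTrunc2 {A : Type*} [Ring A] [Algebra ℚ A] (L : A) : Polynomial A :=
  1 + Polynomial.C L * Polynomial.X + Polynomial.C ((1 / 2 : ℚ) • L ^ 2) * Polynomial.X ^ 2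

/-- Order-2 truncation of `exp((t/2)L)` as a polynomial in `t`. -/
noncomputable def expTrunc2Half {A : Type*} [Ring A] [Algebra ℚ A] (L : A) : Polynomial A :=
  1 + Polynomial.C ((1 / 2 : ℚ) • L) * Polynomial.X
    + Polynomial.C ((1 / 8 : ℚ) • L ^ 2) * Polynomial.X ^ 2

namespace Polynomial

theorem mul_coeff_two {R : Type*} [Semiring R] (p q : R[X]) :
    coeff (p * q) 2 = coeff p 0 * coeff q 2 + coeff p 1 * coeff q 1 + coeff p 2 * coeff q 0 := by
  rw [coeff_mul, Finset.Nat.sum_antidiagonal_eq_sum_range_succ_mk]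
  simp [Finset.sum_range_succ, add_assoc]

end Polynomial

section

variable {A : Type*} [Ring A] [Algebra ℚ A]

@[simp] lemma expTrunc2_coeff_zero (a : A) : (expTrunc2 a).coeff 0 = 1 := by
  simp [expTrunc2, coeff_one]

@[simp] lemma expTrunc2_coeff_one (a : A) : (expTrunc2 a).coeff 1 = a := by
  simp [expTrunc2, coeff_one]

@[simp] lemma expTrunc2_coeff_two (a : A) : (expTrunc2 a).coeff 2 = (1 / 2 : ℚ) • a ^ 2 := by
  simp [expTrunc2, coeff_one]

@[simp] lemma expTrunc2Half_coeff_zero (a : A) : (expTrunc2Half a).coeff 0 = 1 := by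
  simp [expTrunc2Half, coeff_one]

@[simp] lemma expTrunc2Half_coeff_one (a : A) : (expTrunc2Half a).coeff 1 = (1 / 2 : ℚ) • a := by
  simp [expTrunc2Half, coeff_one]

@[simp] lemma expTrunc2Half_coeff_two (a : A) :
    (expTrunc2Half a).coeff 2 = (1 / 8 : ℚ) • a ^ 2 := by
  simp [expTrunc2Half, coeff_one]

@[simp] lemma coeff_zero_prod_expTrunc2 (l : List A) : ((l.map expTrunc2).prod).coeff 0 = 1 := by
  induction l with
  | nil => simp [coeff_one]
  | cons a l ih => simp [ih]

@[simp] lemma coeff_one_prod_expTrunc2 (l : List A) :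
    ((l.map expTrunc2).prod).coeff 1 = l.sum := by
  induction l with
  | nil => simp [coeff_one]
  | cons a l ih => simp [mul_coeff_one, ih, add_comm]

lemma coeff_two_prod_expTrunc2_add_reverse (l : List A) :
    ((l.map expTrunc2).prod).coeff 2 + ((l.reverse.map expTrunc2).prod).coeff 2 = l.sum ^ 2 := by
  induction l with
  | nil => simp [coeff_one]
  | cons a l ih =>
    simp only [List.reverse_cons, List.map_append, List.prod_append, List.map_cons,
      List.map_nil, List.prod_cons, List.prod_nil, mul_one, mul_coeff_two,
      coeff_zero_prod_expTrunc2, coeff_one_prod_expTrunc2, List.sum_reverse,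
      expTrunc2_coeff_zero, expTrunc2_coeff_one, expTrunc2_coeff_two, List.sum_cons, one_mul]
    rw [show (a + l.sum) ^ 2 = a ^ 2 + a * l.sum + l.sum * a + l.sum ^ 2 by noncomm_ring, ← ih]
    module

lemma coeff_average_sandwich_expTrunc2Half {a s : A} {M M' : A[X]}
    (h₀ : M.coeff 0 = 1) (h₀' : M'.coeff 0 = 1) (h₁ : M.coeff 1 = s) (h₁' : M'.coeff 1 = s)
    (h₂ : M.coeff 2 + M'.coeff 2 = s ^ 2) :
    ∀ j ≤ 2, ((1 / 2 : ℚ) • (expTrunc2Half a * M * expTrunc2Half a)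
        + (1 / 2 : ℚ) • (expTrunc2Half a * M' * expTrunc2Half a)).coeff j
      = (expTrunc2 (a + s)).coeff j := by
  intro j hj
  interval_cases j <;>
    simp only [coeff_add, coeff_smul, mul_coeff_zero, mul_coeff_one, mul_coeff_two,
      expTrunc2Half_coeff_zero, expTrunc2Half_coeff_one, expTrunc2Half_coeff_two,
      expTrunc2_coeff_zero, expTrunc2_coeff_one, expTrunc2_coeff_two, h₀, h₀', h₁, h₁',
      eq_sub_of_add_eq' h₂, sq, one_mul, mul_one, add_mul, mul_add, smul_mul_assoc,
      mul_smul_comm, smul_add, smul_sub] <;>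
    module

end

/-- The symmetrized Ninomiya–Victoir (a) composition
`E₀(t/2) E₁(t) ⋯ E_{d+1}(t) E₀(t/2)` averaged with the reversed-order product
matches `I + tL + (t²/2)L²` up to order 2 in `t`. -/
theorem ninomiya_victoir_a_second_order {A : Type*} [Ring A] [Algebra ℚ A]
    (d : ℕ) (L : Fin (d + 2) → A) :
    ∀ j ≤ 2,
      ((1 / 2 : ℚ) • (expTrunc2Half (L 0)
          * ((List.finRange (d + 1)).map fun i => expTrunc2 (L i.succ)).prod
          * expTrunc2Half (L 0))
        + (1 / 2 : ℚ) • (expTrunc2Half (L 0)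
          * ((List.finRange (d + 1)).reverse.map fun i => expTrunc2 (L i.succ)).prod
          * expTrunc2Half (L 0))).coeff j
      = (expTrunc2 (∑ i, L i)).coeff j := by
  set l := (List.finRange (d + 1)).map fun i => L i.succ
  have hforward : ((List.finRange (d + 1)).map fun i => expTrunc2 (L i.succ)) =
      l.map expTrunc2 := by
    simp only [l, List.map_map, Function.comp_def]
  have hreverse : ((List.finRange (d + 1)).reverse.map fun i => expTrunc2 (L i.succ)) =
      l.reverse.map expTrunc2 := by
    simp only [l, ← List.map_reverse, List.map_map, Function.comp_def]
  have hsum : ∑ i, L i = L 0 + l.sum := by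
    rw [Fin.sum_univ_succ, ← Fin.sum_univ_def]
  rw [hforward, hreverse, hsum]
  exact coeff_average_sandwich_expTrunc2Half (coeff_zero_prod_expTrunc2 l)
    (coeff_zero_prod_expTrunc2 l.reverse) (coeff_one_prod_expTrunc2 l)
    (by rw [coeff_one_prod_expTrunc2, List.sum_reverse])
    (coeff_two_prod_expTrunc2_add_reverse l)
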